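/- arXiv:2112.13932 — 2 statements merged into one kernel-verified Lean document; each statement's English description precedes it below -/
import Mathlib

section
/- In the linear regression setup, with the estimated residuals ε̂_n = y_n − X_n β̂_n and the projection Π = X_n(X_nᵀX_n)⁻¹X_nᵀ, the squared 2-Wasserstein distance between the empirical distribution F_n of the true residuals and the centered empirical distribution F̂_n of the estimated residuals satisfies d₂(F_n, F̂_n)² ≤ ((1/n) 𝟙ᵀ ε_n)² + (1/n) ‖ε̂_n − ε_n‖₂², and ‖ε̂_n − ε_n‖₂ = ‖Π ε_n‖₂. -/
open MeasureTheory Matrix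
open scoped ENNReal NNReal BigOperators

noncomputable section

/-- Euclidean norm on `Fin d → ℝ`. -/
def euclNorm {d : ℕ} (v : Fin d → ℝ) : ℝ := Real.sqrt (∑ i, v i ^ 2)

/-- `q`-Wasserstein distance between measures on `Fin d → ℝ` (Euclidean norm cost). -/
def wassE (q : ℝ) {d : ℕ} (μ ν : Measure (Fin d → ℝ)) : ℝ :=
  sInf { r : ℝ | ∃ γ : Measure ((Fin d → ℝ) × (Fin d → ℝ)),
    γ.map Prod.fst = μ ∧ γ.map Prod.snd = ν ∧
    r = (∫ z, euclNorm (z.1 - z.2) ^ q ∂γ) ^ (1 / q) }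

/-- `q`-Wasserstein distance between measures on `ℝ`. -/
def wassR (q : ℝ) (μ ν : Measure ℝ) : ℝ :=
  sInf { r : ℝ | ∃ γ : Measure (ℝ × ℝ),
    γ.map Prod.fst = μ ∧ γ.map Prod.snd = ν ∧
    r = (∫ z, |z.1 - z.2| ^ q ∂γ) ^ (1 / q) }

/-- Empirical measure of `k` points. -/
def empMeasure {E : Type*} [MeasurableSpace E] {k : ℕ} (pts : Fin k → E) : Measure E :=
  (k : ℝ≥0∞)⁻¹ • ∑ i, Measure.dirac (pts i)

instance empMeasure.instIsFiniteMeasure {E : Type*} [MeasurableSpace E] {k : ℕ}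
    (pts : Fin k → E) : IsFiniteMeasure (empMeasure pts) := by
  constructor
  have h : (∑ i, Measure.dirac (pts i)) Set.univ = (k : ℝ≥0∞) := by
    simp [Measure.finset_sum_apply]
  rw [empMeasure, Measure.smul_apply, h, smul_eq_mul]
  by_cases hk : k = 0
  · subst hk; simp
  · rw [ENNReal.inv_mul_cancel (by exact_mod_cast hk) (ENNReal.natCast_ne_top k)]
    exact ENNReal.one_lt_top

/-- Spectral norm (operator norm w.r.t. Euclidean norms). -/
def specNorm {m n : ℕ} (A : Matrix (Fin m) (Fin n) ℝ) : ℝ :=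
  ‖LinearMap.toContinuousLinearMap (Matrix.toEuclideanLin A)‖

/-- Orlicz (quasi-)norm of order `α` of the identity under a distribution `F` on `ℝ`. -/
def orlicz (α : ℝ) (F : Measure ℝ) : ℝ :=
  sInf { t : ℝ | 0 < t ∧ ∫ x, Real.exp ((|x| / t) ^ α) ∂F ≤ 2 }

/-- The OLS map `(XᵀX)⁻¹Xᵀ`. -/
def olsM {n p : ℕ} (X : Matrix (Fin n) (Fin p) ℝ) : Matrix (Fin p) (Fin n) ℝ :=
  (Xᵀ * X)⁻¹ * Xᵀ

/-- Center a vector by subtracting the mean of its entries. -/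
def center {n : ℕ} (v : Fin n → ℝ) : Fin n → ℝ := fun i => v i - (∑ j, v j) / n

/-- Projection onto the column space of `X`. -/
def projMat {n p : ℕ} (X : Matrix (Fin n) (Fin p) ℝ) : Matrix (Fin n) (Fin n) ℝ :=
  X * (Xᵀ * X)⁻¹ * Xᵀ

/-- The matrix `(1/n)𝟙𝟙ᵀ + Π`. -/
def covMat {n p : ℕ} (X : Matrix (Fin n) (Fin p) ℝ) : Matrix (Fin n) (Fin n) ℝ :=
  (n : ℝ)⁻¹ • Matrix.of (fun _ _ => (1 : ℝ)) + projMat X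

/-- Uniform distribution on `Fin n`. -/
def unifFin (n : ℕ) : Measure (Fin n) := empMeasure (fun i : Fin n => i)

/-!
Pairing each true residual `εᵢ` with the `i`-th centered estimated residual is a coupling of
`F_n` and `F̂_n`, so `d₂(F_n, F̂_n)² ≤ n⁻¹ ∑ᵢ (εᵢ − ε̂ᵢ + m)²`, where `m` is the mean of `ε̂`.
Writing `a` for the mean of `ε`, expanding the square gives
`n⁻¹ ‖ε̂ − ε‖² + a² − (a − m)² ≤ n⁻¹ ‖ε̂ − ε‖² + a²`.
For the identity, full column rank makes `XᵀX` invertible, so `ΠX = X` and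
`ε̂ = (I − Π) y = (I − Π) ε`, i.e. `ε̂ − ε = −Πε`.
-/

namespace Matrix

variable {m K : Type*} [Fintype m] [DecidableEq m] [Field K]

theorem isUnit_of_rank_eq_card {A : Matrix m m K} (h : A.rank = Fintype.card m) : IsUnit A := by
  have hrange : LinearMap.range A.mulVecLin = ⊤ := by
    apply Submodule.eq_top_of_finrank_eq
    rw [← Matrix.rank, h, Module.finrank_fintype_fun_eq_card]
  exact mulVec_surjective_iff_isUnit.mp (LinearMap.range_eq_top.mp hrange)

end Matrix

section OrdinaryLeastSquares

variable {n p : ℕ} {X : Matrix (Fin n) (Fin p) ℝ}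

theorem isUnit_transpose_mul_self_of_rank_eq (hX : X.rank = p) : IsUnit (Xᵀ * X) :=
  isUnit_of_rank_eq_card (by rw [rank_transpose_mul_self, hX, Fintype.card_fin])

theorem projMat_mul_self_of_rank_eq (hX : X.rank = p) : projMat X * X = X := by
  have hdet := (isUnit_iff_isUnit_det _).mp (isUnit_transpose_mul_self_of_rank_eq hX)
  rw [projMat, Matrix.mul_assoc, Matrix.mul_assoc, nonsing_inv_mul _ hdet, Matrix.mul_one]

theorem ols_residual_sub_noise (hX : X.rank = p) (β : Fin p → ℝ) (ε : Fin n → ℝ) :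
    (X *ᵥ β + ε) - X *ᵥ (olsM X *ᵥ (X *ᵥ β + ε)) - ε = -(projMat X *ᵥ ε) := by
  have hXols : X * olsM X = projMat X := by rw [olsM, projMat, Matrix.mul_assoc]
  rw [mulVec_mulVec, hXols, mulVec_add, mulVec_mulVec, projMat_mul_self_of_rank_eq hX]
  abel

end OrdinaryLeastSquares

theorem euclNorm_sq {d : ℕ} (v : Fin d → ℝ) : euclNorm v ^ 2 = ∑ i, v i ^ 2 :=
  Real.sq_sqrt (Finset.sum_nonneg fun _ _ => sq_nonneg _)

theorem euclNorm_neg {d : ℕ} (v : Fin d → ℝ) : euclNorm (-v) = euclNorm v := by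
  simp only [euclNorm, Pi.neg_apply, neg_sq]

section EmpiricalMeasure

variable {E F : Type*} [MeasurableSpace E] [MeasurableSpace F] {k : ℕ}

theorem empMeasure_map (pts : Fin k → E) {f : E → F} (hf : Measurable f) :
    (empMeasure pts).map f = empMeasure (fun i => f (pts i)) := by
  rw [empMeasure, empMeasure, Measure.map_smul, ← Measure.mapₗ_apply_of_measurable hf, map_sum]
  simp only [Measure.mapₗ_apply_of_measurable hf, Measure.map_dirac' hf]

theorem integral_empMeasure (pts : Fin k → E) {g : E → ℝ} (hg : Measurable g) :
    ∫ x, g x ∂(empMeasure pts) = (k : ℝ)⁻¹ * ∑ i, g (pts i) := by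
  rw [empMeasure, integral_smul_measure, integral_finsetSum_measure]
  · simp [integral_dirac' _ _ hg.stronglyMeasurable, ENNReal.toReal_inv]
  · exact fun i _ => (integrable_const (g (pts i))).congr (ae_eq_dirac' hg).symm

end EmpiricalMeasure

section Wasserstein

theorem wassR_nonneg (q : ℝ) (μ ν : Measure ℝ) : 0 ≤ wassR q μ ν := by
  refine Real.sInf_nonneg fun r ⟨γ, _, _, hr⟩ => hr ▸ Real.rpow_nonneg ?_ _
  exact integral_nonneg fun z => Real.rpow_nonneg (abs_nonneg _) _

theorem wassR_le_of_coupling (q : ℝ) {μ ν : Measure ℝ} {γ : Measure (ℝ × ℝ)}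
    (hfst : γ.map Prod.fst = μ) (hsnd : γ.map Prod.snd = ν) :
    wassR q μ ν ≤ (∫ z, |z.1 - z.2| ^ q ∂γ) ^ (1 / q) := by
  refine csInf_le ⟨0, fun r ⟨γ', _, _, hr⟩ => hr ▸ Real.rpow_nonneg ?_ _⟩ ⟨γ, hfst, hsnd, rfl⟩
  exact integral_nonneg fun z => Real.rpow_nonneg (abs_nonneg _) _

theorem wassR_two_sq_le_of_coupling {μ ν : Measure ℝ} {γ : Measure (ℝ × ℝ)}
    (hfst : γ.map Prod.fst = μ) (hsnd : γ.map Prod.snd = ν) :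
    wassR 2 μ ν ^ 2 ≤ ∫ z, |z.1 - z.2| ^ (2 : ℝ) ∂γ := by
  have hI : 0 ≤ ∫ z, |z.1 - z.2| ^ (2 : ℝ) ∂γ :=
    integral_nonneg fun z => Real.rpow_nonneg (abs_nonneg _) _
  calc wassR 2 μ ν ^ 2 ≤ ((∫ z, |z.1 - z.2| ^ (2 : ℝ) ∂γ) ^ (1 / 2 : ℝ)) ^ 2 :=
        pow_le_pow_left₀ (wassR_nonneg 2 μ ν) (wassR_le_of_coupling 2 hfst hsnd) 2
    _ = ∫ z, |z.1 - z.2| ^ (2 : ℝ) ∂γ := by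
        rw [← Real.rpow_natCast, ← Real.rpow_mul hI]; norm_num

theorem wassR_empMeasure_sq_le {k : ℕ} (a b : Fin k → ℝ) :
    wassR 2 (empMeasure a) (empMeasure b) ^ 2 ≤ (k : ℝ)⁻¹ * ∑ i, (a i - b i) ^ 2 := by
  let γ : Measure (ℝ × ℝ) := empMeasure fun i => (a i, b i)
  have hcost : Measurable fun z : ℝ × ℝ => |z.1 - z.2| ^ (2 : ℝ) :=
    (measurable_fst.sub measurable_snd).abs.pow_const _
  calc wassR 2 (empMeasure a) (empMeasure b) ^ 2 ≤ ∫ z, |z.1 - z.2| ^ (2 : ℝ) ∂γ :=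
        wassR_two_sq_le_of_coupling (empMeasure_map _ measurable_fst)
          (empMeasure_map _ measurable_snd)
    _ = (k : ℝ)⁻¹ * ∑ i, (a i - b i) ^ 2 := by
        rw [integral_empMeasure _ hcost]
        simp only [Real.rpow_two, sq_abs]

end Wasserstein

theorem inv_mul_sum_sq_sub_center_le {n : ℕ} (ε r : Fin n → ℝ) :
    (n : ℝ)⁻¹ * ∑ i, (ε i - center r i) ^ 2 ≤
      ((∑ i, ε i) / n) ^ 2 + (n : ℝ)⁻¹ * ∑ i, (r i - ε i) ^ 2 := by
  rcases Nat.eq_zero_or_pos n with rfl | hn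
  · simp
  have hn' : (n : ℝ) ≠ 0 := by positivity
  set a := (∑ i, ε i) / n
  set m := (∑ i, r i) / n
  have hexpand : ∑ i, (ε i - center r i) ^ 2
      = ∑ i, (r i - ε i) ^ 2 + n * (2 * m * a - m ^ 2) := by
    have hsum : ∑ i, (ε i - r i) = n * (a - m) := by
      rw [Finset.sum_sub_distrib, mul_sub, mul_div_cancel₀ _ hn', mul_div_cancel₀ _ hn']
    calc ∑ i, (ε i - center r i) ^ 2
        = ∑ i, ((r i - ε i) ^ 2 + 2 * m * (ε i - r i) + m ^ 2) :=
          Finset.sum_congr rfl fun i _ => by simp only [center, m]; ring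
      _ = _ := by
          simp only [Finset.sum_add_distrib, ← Finset.mul_sum, hsum, Finset.sum_const,
            Finset.card_univ, Fintype.card_fin, nsmul_eq_mul]
          ring
  rw [hexpand, mul_add, ← mul_assoc, inv_mul_cancel₀ hn', one_mul]
  nlinarith [sq_nonneg (a - m)]

/-- equations (2.3)–(2.4) of Freedman, and the projection identity:
`d₂(F_n, F̂_n)² ≤ ((1/n)𝟙ᵀε)² + (1/n)‖ε̂ − ε‖₂²` and `‖ε̂ − ε‖₂ = ‖Πε‖₂`. -/
theorem stmt9 (n p : ℕ) (X : Matrix (Fin n) (Fin p) ℝ) (hX : X.rank = p)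
    (β : Fin p → ℝ) (ε : Fin n → ℝ) :
    let y := X.mulVec β + ε
    let bhat := (olsM X).mulVec y
    let rhat := y - X.mulVec bhat
    wassR 2 (empMeasure ε) (empMeasure (center rhat)) ^ 2 ≤
        ((∑ i, ε i) / n) ^ 2 + (n : ℝ)⁻¹ * euclNorm (rhat - ε) ^ 2 ∧
      euclNorm (rhat - ε) = euclNorm ((projMat X).mulVec ε) := by
  intro y bhat rhat
  have hresidual : rhat - ε = -(projMat X *ᵥ ε) := ols_residual_sub_noise hX β ε
  refine ⟨?_, by rw [hresidual, euclNorm_neg]⟩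
  calc wassR 2 (empMeasure ε) (empMeasure (center rhat)) ^ 2
      ≤ (n : ℝ)⁻¹ * ∑ i, (ε i - center rhat i) ^ 2 := wassR_empMeasure_sq_le _ _
    _ ≤ ((∑ i, ε i) / n) ^ 2 + (n : ℝ)⁻¹ * ∑ i, (rhat i - ε i) ^ 2 :=
        inv_mul_sum_sq_sub_center_le ε rhat
    _ = ((∑ i, ε i) / n) ^ 2 + (n : ℝ)⁻¹ * euclNorm (rhat - ε) ^ 2 := by
        rw [euclNorm_sq]; rfl
end
end

section
/- Consider the distributionally robust optimization problem: minimize f(x) subject to sup over P_{β̂_n} ∈ 𝒫 of E[a_jᵀ(β̂_n)x − b_j(β̂_n)] ≤ 0 for j = 1,…,m (expected-value risk measure with risk limit Δ_j = 0), where 𝒫 = {μ : d₁(Φ*_k(F̂_n), μ) ≤ ε} and ε is chosen so that P(d₁(Φ(F), Φ*_k(F̂_n)) ≥ ε) ≤ δ. Since the constraint functions are affine in β and the least-squares estimator β̂_n is unbiased (E β̂_n = β), if the problem is feasible with optimizer x̂*_{n,k}, then for each j = 1,…,m: P(a_jᵀ(β) x̂*_{n,k} − b_j(β) ≤ 0)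 ≥ 1 − δ, i.e. the optimizer satisfies the true constraint with probability at least 1 − δ. -/
open MeasureTheory Matrix
open scoped ENNReal NNReal BigOperators

noncomputable section

section Aux

open MeasureTheory

lemma empMeasure_univ {E : Type*} [MeasurableSpace E] {k : ℕ} (hk : k ≠ 0) (pts : Fin k → E) :
    empMeasure pts Set.univ = 1 := by
  have h : (∑ i, Measure.dirac (pts i)) Set.univ = (k : ℝ≥0∞) := by
    simp [Measure.finset_sum_apply]
  rw [empMeasure, Measure.smul_apply, h, smul_eq_mul,
    ENNReal.inv_mul_cancel (by exact_mod_cast hk) (ENNReal.natCast_ne_top k)]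

lemma euclNorm_sub_symm {d : ℕ} (a b : Fin d → ℝ) : euclNorm (a - b) = euclNorm (b - a) := by
  unfold euclNorm
  congr 1
  refine Finset.sum_congr rfl fun i _ => ?_
  simp only [Pi.sub_apply]
  ring

lemma wassE_symm (q : ℝ) {d : ℕ} (μ ν : Measure (Fin d → ℝ)) : wassE q μ ν = wassE q ν μ := by
  have hm : Measurable fun z : (Fin d → ℝ) × (Fin d → ℝ) => euclNorm (z.1 - z.2) ^ q := by
    unfold euclNorm
    fun_prop
  have key : ∀ μ ν : Measure (Fin d → ℝ),
      { r : ℝ | ∃ γ : Measure ((Fin d → ℝ) × (Fin d → ℝ)),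
        γ.map Prod.fst = μ ∧ γ.map Prod.snd = ν ∧
        r = (∫ z, euclNorm (z.1 - z.2) ^ q ∂γ) ^ (1 / q) } ⊆
      { r : ℝ | ∃ γ : Measure ((Fin d → ℝ) × (Fin d → ℝ)),
        γ.map Prod.fst = ν ∧ γ.map Prod.snd = μ ∧
        r = (∫ z, euclNorm (z.1 - z.2) ^ q ∂γ) ^ (1 / q) } := by
    rintro μ ν r ⟨γ, h1, h2, h3⟩
    refine ⟨γ.map Prod.swap, ?_, ?_, ?_⟩
    · rw [Measure.map_map measurable_fst measurable_swap]; exact h2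
    · rw [Measure.map_map measurable_snd measurable_swap]; exact h1
    · rw [h3]
      congr 1
      rw [integral_map measurable_swap.aemeasurable hm.aestronglyMeasurable]
      refine integral_congr_ae (Filter.Eventually.of_forall fun z => ?_)
      simp only [Prod.fst_swap, Prod.snd_swap]
      rw [euclNorm_sub_symm]
  unfold wassE
  exact congrArg sInf (Set.Subset.antisymm (key μ ν) (key ν μ))

lemma pi_map_eval {ι : Type*} [Fintype ι] [DecidableEq ι] {α : ι → Type*}
    [∀ i, MeasurableSpace (α i)] (μ : ∀ i, Measure (α i)) [∀ i, IsProbabilityMeasure (μ i)]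
    (i : ι) : (Measure.pi μ).map (fun f => f i) = μ i := by
  ext s hs
  rw [Measure.map_apply (measurable_pi_apply i) hs]
  have h : (fun f : ∀ j, α j => f i) ⁻¹' s
      = Set.univ.pi (Function.update (fun j => (Set.univ : Set (α j))) i s) :=
    Set.eval_preimage
  rw [h, Measure.pi_pi]
  rw [Finset.prod_eq_single i (fun j _ hj => by
    rw [Function.update_of_ne hj]; exact measure_univ) (fun h => absurd (Finset.mem_univ i) h)]
  rw [Function.update_self]

end Aux

/-- Theorem 2 of the paper, constraint-satisfaction guarantee:
with the expected-value risk measure and risk limits `Δ_j = 0`, if the Wasserstein radius `εr`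
satisfies `P(d₁(Φ(F), Φ*_k(F̂_n)) ≥ εr) ≤ δ`, the constraints are affine in `β`, and the OLS
estimator is unbiased, then any optimizer `x̂*` of the distributionally robust problem satisfies
the true constraints with probability at least `1 − δ`:
`P(a_jᵀ(β)x̂* − b_j(β) ≤ 0) ≥ 1 − δ` for each `j`. -/
theorem stmt17 (n p k d m : ℕ) (X : Matrix (Fin n) (Fin p) ℝ) (hX : X.rank = p)
    (Ω : Type*) [MeasurableSpace Ω] (P : Measure Ω) [IsProbabilityMeasure P]
    (F : Measure ℝ) [IsProbabilityMeasure F]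
    (hintF : Integrable (fun x : ℝ => x) F) (hmean : ∫ x, x ∂F = 0)
    (β : Fin p → ℝ) (ε : Ω → Fin n → ℝ) (Idx : Ω → Fin k → Fin n → Fin n)
    (hlaw : Measure.map (fun ω => (ε ω, Idx ω)) P
      = (Measure.pi fun _ : Fin n => F).prod
          (Measure.pi fun _ : Fin k => Measure.pi fun _ : Fin n => unifFin n))
    (f : (Fin d → ℝ) → ℝ) (hf : ConvexOn ℝ Set.univ f)
    (a : Fin m → (Fin p → ℝ) → (Fin d → ℝ)) (b : Fin m → (Fin p → ℝ) → ℝ)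
    (ha : ∀ j, ∃ (A : Matrix (Fin d) (Fin p) ℝ) (a0 : Fin d → ℝ),
      ∀ βv, a j βv = A.mulVec βv + a0)
    (hb : ∀ j, ∃ (bv : Fin p → ℝ) (b0 : ℝ), ∀ βv, b j βv = bv ⬝ᵥ βv + b0)
    (εr δ : ℝ) (hδ : 0 < δ) (hδ1 : δ < 1) (hεr : 0 < εr) :
    let y : Ω → Fin n → ℝ := fun ω => X.mulVec β + ε ω
    let bhat : Ω → Fin p → ℝ := fun ω => (olsM X).mulVec (y ω)
    let rhat : Ω → Fin n → ℝ := fun ω => y ω - X.mulVec (bhat ω)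
    let bstar : Ω → Fin k → Fin p → ℝ := fun ω i =>
      (olsM X).mulVec (X.mulVec (bhat ω) + fun j => center (rhat ω) (Idx ω i j))
    let Phistar : Ω → Measure (Fin p → ℝ) := fun ω => empMeasure (bstar ω)
    let PhiF : Measure (Fin p → ℝ) := Measure.map bhat P
    let g : Fin m → (Fin d → ℝ) → (Fin p → ℝ) → ℝ := fun j x βv => a j βv ⬝ᵥ x - b j βv
    -- feasibility: expected-value risk measure with risk limit 0, bootstrap ambiguity set
    let Feas : Ω → (Fin d → ℝ) → Prop := fun ω x => ∀ j, ∀ μ : Measure (Fin p → ℝ),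
      IsProbabilityMeasure μ → wassE 1 (Phistar ω) μ ≤ εr → (∫ βv, g j x βv ∂μ) ≤ 0
    -- unbiasedness of the OLS estimator
    (∫ ω, bhat ω ∂P) = β →
    -- the radius is chosen so that the ambiguity set contains `Φ(F)` with probability `≥ 1 − δ`
    P {ω | εr ≤ wassE 1 PhiF (Phistar ω)} ≤ ENNReal.ofReal δ →
    ∀ xhat : Ω → Fin d → ℝ, (∀ ω, Feas ω (xhat ω)) →
      (∀ ω x, Feas ω x → f (xhat ω) ≤ f x) →
      ∀ j, ENNReal.ofReal (1 - δ) ≤ P {ω | a j β ⬝ᵥ xhat ω - b j β ≤ 0} := by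
  intro y bhat rhat bstar Phistar PhiF g Feas hub hδP xhat hxfeas hopt j
  haveI hu1 : IsFiniteMeasure (unifFin n) := by unfold unifFin; infer_instance
  haveI hu2 : IsProbabilityMeasure (Measure.pi fun _ : Fin n => unifFin n) :=
    ⟨by rw [Measure.pi_univ]; exact Finset.prod_eq_one fun i _ => empMeasure_univ i.pos.ne' _⟩
  -- Step 1: the pair (ε, Idx) is a.e. measurable
  have hφm : AEMeasurable (fun ω => (ε ω, Idx ω)) P := by
    by_contra h
    rw [Measure.map_of_not_aemeasurable h] at hlaw
    have h1 : (0 : Measure ((Fin n → ℝ) × (Fin k → Fin n → Fin n))) Set.univ = 1 := by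
      rw [hlaw]; exact measure_univ
    simp at h1
  have hεm : ∀ i : Fin n, AEMeasurable (fun ω => ε ω i) P := fun i =>
    ((measurable_pi_apply i).comp measurable_fst).comp_aemeasurable hφm
  -- Step 2: each residual coordinate has law F
  have hεlaw : ∀ i : Fin n, Measure.map (fun ω => ε ω i) P = F := by
    intro i
    haveI : IsProbabilityMeasure (unifFin n) := ⟨empMeasure_univ i.pos.ne' _⟩
    have hg1 : Measurable (fun z : (Fin n → ℝ) × (Fin k → Fin n → Fin n) => z.1 i) :=
      (measurable_pi_apply i).comp measurable_fst
    have hmm := AEMeasurable.map_map_of_aemeasurable hg1.aemeasurable hφm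
    rw [hlaw] at hmm
    have hcomp : ((fun z : (Fin n → ℝ) × (Fin k → Fin n → Fin n) => z.1 i)
        ∘ (fun ω => (ε ω, Idx ω))) = fun ω => ε ω i := rfl
    rw [hcomp] at hmm
    rw [← hmm]
    have h2 : Measure.map (fun z : (Fin n → ℝ) × (Fin k → Fin n → Fin n) => z.1 i)
        ((Measure.pi fun _ : Fin n => F).prod
          (Measure.pi fun _ : Fin k => Measure.pi fun _ : Fin n => unifFin n))
        = Measure.map (fun f : Fin n → ℝ => f i) (Measure.map Prod.fst
          ((Measure.pi fun _ : Fin n => F).prod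
          (Measure.pi fun _ : Fin k => Measure.pi fun _ : Fin n => unifFin n))) :=
      (Measure.map_map (measurable_pi_apply i) measurable_fst).symm
    rw [h2, Measure.map_fst_prod, measure_univ, one_smul, pi_map_eval]
  -- Step 3: integrability of residual coordinates
  have hεint : ∀ i : Fin n, Integrable (fun ω => ε ω i) P := by
    intro i
    have h1 : Integrable (fun x : ℝ => x) (Measure.map (fun ω => ε ω i) P) := by
      rw [hεlaw i]; exact hintF
    exact (integrable_map_measure aestronglyMeasurable_id (hεm i)).mp h1
  -- Step 4: measurability and integrability of bhat
  have hL : Measurable (fun v : Fin n → ℝ => (olsM X).mulVec (X.mulVec β + v)) := by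
    refine measurable_pi_iff.mpr fun i => ?_
    simp only [Matrix.mulVec, dotProduct, Pi.add_apply]
    fun_prop
  have hbm : AEMeasurable bhat P :=
    hL.comp_aemeasurable (measurable_fst.comp_aemeasurable hφm)
  have hbint : ∀ i : Fin p, Integrable (fun ω => bhat ω i) P := by
    intro i
    have hrep : (fun ω => bhat ω i)
        = fun ω => ∑ jj : Fin n, olsM X i jj * (X.mulVec β jj + ε ω jj) := rfl
    rw [hrep]
    exact integrable_finset_sum _ fun jj _ =>
      (((integrable_const _).add (hεint jj)).const_mul _)
  have hbInt : Integrable bhat P := by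
    have hrep : bhat = fun ω => ∑ i : Fin p, Pi.single i (bhat ω i) := by
      funext ω
      rw [Finset.univ_sum_single (bhat ω)]
    rw [hrep]
    refine integrable_finset_sum _ fun i _ => ?_
    have : (fun ω => (Pi.single i (bhat ω i) : Fin p → ℝ))
        = fun ω => (bhat ω i) • (Pi.single i 1 : Fin p → ℝ) := by
      funext ω
      rw [← Pi.single_smul, smul_eq_mul, mul_one]
    rw [this]
    exact (hbint i).smul_const _
  have hbmean : ∀ i : Fin p, (∫ ω, bhat ω i ∂P) = β i := by
    intro i
    have := (ContinuousLinearMap.proj (R := ℝ) (φ := fun _ : Fin p => ℝ) i).integral_comp_comm hbInt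
    rw [hub] at this
    exact this
  haveI hPhiF : IsProbabilityMeasure PhiF := Measure.isProbabilityMeasure_map hbm
  obtain ⟨A, a0, hA⟩ := ha j
  obtain ⟨bv, b0, hB⟩ := hb j
  -- Step 5: the expected constraint value under PhiF equals the true constraint value
  have key : ∀ x : Fin d → ℝ, (∫ βv, g j x βv ∂PhiF) = a j β ⬝ᵥ x - b j β := by
    intro x
    set c : Fin p → ℝ := fun i => (∑ l, A l i * x l) - bv i with hc
    set e : ℝ := (∑ l, a0 l * x l) - b0 with he
    have hg : ∀ βv : Fin p → ℝ, g j x βv = (∑ i, c i * βv i) + e := by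
      intro βv
      show a j βv ⬝ᵥ x - b j βv = _
      rw [hA βv, hB βv]
      simp only [dotProduct, Matrix.mulVec, Pi.add_apply, hc, he, add_mul, sub_mul,
        Finset.sum_add_distrib, Finset.sum_sub_distrib, Finset.sum_mul]
      rw [Finset.sum_comm]
      have h1 : ∀ i : Fin p, ∑ l, A l i * βv i * x l = ∑ l, A l i * x l * βv i := by
        intro i; exact Finset.sum_congr rfl fun l _ => by ring
      rw [Finset.sum_congr rfl fun i _ => h1 i]
      ring
    have hgc : Continuous fun βv : Fin p → ℝ => (∑ i, c i * βv i) + e := by fun_prop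
    calc (∫ βv, g j x βv ∂PhiF) = ∫ βv, ((∑ i, c i * βv i) + e) ∂PhiF := by
          exact integral_congr_ae (Filter.Eventually.of_forall fun βv => hg βv)
      _ = ∫ ω, ((∑ i, c i * bhat ω i) + e) ∂P := by
          exact integral_map hbm hgc.aestronglyMeasurable
      _ = (∑ i, c i * β i) + e := by
          rw [integral_add (integrable_finset_sum _ fun i _ => (hbint i).const_mul _)
            (integrable_const _)]
          rw [integral_finset_sum _ fun i _ => (hbint i).const_mul _]
          simp only [integral_const, measure_univ, ENNReal.toReal_one, probReal_univ, one_smul]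
          congr 1
          exact Finset.sum_congr rfl fun i _ => by rw [integral_const_mul, hbmean i]
      _ = a j β ⬝ᵥ x - b j β := (hg β).symm
  -- Step 6: on the complement of the bad event the true constraint holds
  have hsub : {ω | εr ≤ wassE 1 PhiF (Phistar ω)}ᶜ ⊆ {ω | a j β ⬝ᵥ xhat ω - b j β ≤ 0} := by
    intro ω hω
    have hlt : wassE 1 PhiF (Phistar ω) < εr := not_le.mp hω
    have hle : wassE 1 (Phistar ω) PhiF ≤ εr := by
      rw [wassE_symm]; exact hlt.le
    have := hxfeas ω j PhiF hPhiF hle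
    rwa [key (xhat ω)] at this
  -- Step 7: conclude
  calc ENNReal.ofReal (1 - δ) = 1 - ENNReal.ofReal δ := by
        rw [ENNReal.ofReal_sub 1 hδ.le, ENNReal.ofReal_one]
    _ ≤ 1 - P {ω | εr ≤ wassE 1 PhiF (Phistar ω)} := tsub_le_tsub_left hδP 1
    _ ≤ P {ω | εr ≤ wassE 1 PhiF (Phistar ω)}ᶜ := by
        rw [tsub_le_iff_right]
        calc (1 : ℝ≥0∞) = P Set.univ := measure_univ.symm
          _ = P ({ω | εr ≤ wassE 1 PhiF (Phistar ω)}ᶜ ∪ {ω | εr ≤ wassE 1 PhiF (Phistar ω)}) := by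
              rw [Set.compl_union_self]
          _ ≤ _ := measure_union_le _ _
    _ ≤ P {ω | a j β ⬝ᵥ xhat ω - b j β ≤ 0} := measure_mono hsub
end
end
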